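/- Let b>0, n∈ℕ₀, α≥0, and f∈C_α^n([b,∞)). Then for every p≥0 the function y ↦ y^p f(y) belongs to C_{α+p}^n([b,∞)) and ‖y^p f‖_{C_{α+p}^n([b,∞))} ≤ (p+n+1)^n · ‖f‖_{C_α^n([b,∞))}. -/

import Mathlib

/-!
Write `x = p + n`, `aₖ` for the boundary terms and `N` for the supremum term of `‖f‖`.
Integrating `‖f⁽ⁿ⁾(y)‖ ≤ N yᵅ` down from `b` gives
`‖f⁽ᵏ⁾(y)‖ ≤ (N + ∑_{k ≤ m < n} aₘ) y^(n - k + α)`. By Leibniz' rule and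
`|(yᵖ)⁽ⁱ⁾| ≤ xⁱ y^(p - i)`, the boundary term of `yᵖ f` of order `k` is at most
`∑ⱼ C(k, j) xʲ a_{k-j}`, and its supremum term is at most `∑ᵢ C(n, i) xⁱ (N + ∑_{n-i ≤ m < n} aₘ)`.
As `C(i + m, i) ≤ C(n, i)` for `i + m ≤ n`, the sum of all these is at most
`∑ᵢ C(n, i) xⁱ (∑ₘ aₘ + N) = (x + 1)ⁿ ‖f‖`.
-/

open Set Filter MeasureTheory Topology

noncomputable section

/-- Membership in the space `C_α^n([b,∞))`: `f` is `n`-times continuously differentiable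
on `[b,∞)` and its `n`-th derivative satisfies a polynomial bound `M·y^α`. -/
def MemCnAlpha (b : ℝ) (n : ℕ) (α : ℝ) (f : ℝ → ℂ) : Prop :=
  ContDiffOn ℝ n f (Set.Ici b) ∧
    ∃ M : ℝ, 0 ≤ M ∧ ∀ y ∈ Set.Ici b, ‖iteratedDerivWithin n f (Set.Ici b) y‖ ≤ M * y ^ α

/-- The norm on the space `C_α^n([b,∞))`. -/
def CnAlphaNorm (b : ℝ) (n : ℕ) (α : ℝ) (f : ℝ → ℂ) : ℝ :=
  (∑ k ∈ Finset.range n, ‖iteratedDerivWithin k f (Set.Ici b) b‖ / b ^ ((n : ℝ) - k + α)) +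
    ⨆ y : Set.Ici b, ‖iteratedDerivWithin n f (Set.Ici b) y‖ / (y : ℝ) ^ α

open Finset

section RpowDerivatives

variable {b : ℝ} (hb : 0 < b) (p : ℝ)
include hb

theorem iteratedDerivWithin_ofReal_rpow (k : ℕ) :
    EqOn (iteratedDerivWithin k (fun y : ℝ => ((y ^ p : ℝ) : ℂ)) (Ici b))
      (fun y => (((∏ i ∈ range k, (p - i)) * y ^ (p - k) : ℝ) : ℂ)) (Ici b) := by
  induction k with
  | zero => intro y _; simp
  | succ k ih =>
    intro y hy
    have hderiv : HasDerivAt (fun y : ℝ => (((∏ i ∈ range k, (p - i)) * y ^ (p - k) : ℝ) : ℂ))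
        (((∏ i ∈ range k, (p - i)) * ((p - k) * y ^ (p - k - 1)) : ℝ) : ℂ) y :=
      ((Real.hasDerivAt_rpow_const (Or.inl (hb.trans_le hy).ne')).const_mul _).ofReal_comp
    rw [iteratedDerivWithin_succ, derivWithin_congr ih (ih hy),
      hderiv.hasDerivWithinAt.derivWithin (uniqueDiffOn_Ici b y hy), prod_range_succ]
    push_cast
    ring_nf

theorem norm_iteratedDerivWithin_ofReal_rpow_le (hp : 0 ≤ p) (k : ℕ) {y : ℝ} (hy : y ∈ Ici b) :
    ‖iteratedDerivWithin k (fun y : ℝ => ((y ^ p : ℝ) : ℂ)) (Ici b) y‖ ≤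
      (p + k) ^ k * y ^ (p - k) := by
  have hfactor : ∀ i ∈ range k, |p - i| ≤ p + k := fun i hi => by
    have : (i : ℝ) < k := by exact_mod_cast mem_range.1 hi
    rw [abs_le]; constructor <;> linarith [(i.cast_nonneg : (0 : ℝ) ≤ i)]
  rw [iteratedDerivWithin_ofReal_rpow hb p k hy, Complex.norm_real, Real.norm_eq_abs, abs_mul,
    abs_prod, abs_of_pos (Real.rpow_pos_of_pos (hb.trans_le hy) _)]
  refine mul_le_mul_of_nonneg_right ?_ (Real.rpow_nonneg (hb.le.trans hy) _)
  simpa using prod_le_prod (fun _ _ => abs_nonneg _) hfactor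

theorem contDiffOn_ofReal_rpow (n : ℕ) :
    ContDiffOn ℝ n (fun y : ℝ => ((y ^ p : ℝ) : ℂ)) (Ici b) := fun y hy =>
  Complex.ofRealCLM.contDiff.contDiffAt.comp_contDiffWithinAt y
    (Real.contDiffAt_rpow_const_of_ne (hb.trans_le hy).ne').contDiffWithinAt

end RpowDerivatives

theorem norm_le_rpow_of_norm_hasDerivWithinAt_le {E : Type*} [NormedAddCommGroup E]
    [NormedSpace ℝ E] {h h' : ℝ → E} {b C β : ℝ} (hb : 0 < b) (hC : 0 ≤ C) (hβ : 0 ≤ β)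
    (hderiv : ∀ t ∈ Ici b, HasDerivWithinAt h (h' t) (Ici b) t)
    (hbound : ∀ t ∈ Ici b, ‖h' t‖ ≤ C * t ^ β) {y : ℝ} (hy : y ∈ Ici b) :
    ‖h y‖ ≤ (‖h b‖ / b ^ (β + 1) + C) * y ^ (β + 1) := by
  have hby : b ≤ y := hy
  have hy0 : 0 < y := hb.trans_le hby
  have hincr : ‖h y - h b‖ ≤ C * y ^ β * (y - b) := by
    simpa [Real.norm_eq_abs, abs_of_nonneg (sub_nonneg.2 hby)] using
      (convex_Icc b y).norm_image_sub_le_of_norm_hasDerivWithin_le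
        (fun t ht => (hderiv t ht.1).mono Icc_subset_Ici_self)
        (fun t ht => (hbound t ht.1).trans <| by
          gcongr; exacts [hb.le.trans ht.1, ht.2])
        (left_mem_Icc.2 hby) (right_mem_Icc.2 hby)
  have hstart : ‖h b‖ ≤ ‖h b‖ / b ^ (β + 1) * y ^ (β + 1) := by
    rw [div_mul_eq_mul_div, le_div_iff₀ (by positivity)]
    gcongr
  calc ‖h y‖ ≤ ‖h b‖ + ‖h y - h b‖ := norm_le_insert' _ _
    _ ≤ ‖h b‖ / b ^ (β + 1) * y ^ (β + 1) + C * y ^ β * y :=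
      add_le_add hstart (hincr.trans (by gcongr; linarith))
    _ = (‖h b‖ / b ^ (β + 1) + C) * y ^ (β + 1) := by
      rw [Real.rpow_add_one hy0.ne']; ring

def CnAlphaBoundaryTerm (b : ℝ) (n : ℕ) (α : ℝ) (f : ℝ → ℂ) (k : ℕ) : ℝ :=
  ‖iteratedDerivWithin k f (Ici b) b‖ / b ^ ((n : ℝ) - k + α)

def CnAlphaSupTerm (b : ℝ) (n : ℕ) (α : ℝ) (f : ℝ → ℂ) : ℝ :=
  ⨆ y : Ici b, ‖iteratedDerivWithin n f (Ici b) y‖ / (y : ℝ) ^ α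

theorem cnAlphaNorm_eq (b : ℝ) (n : ℕ) (α : ℝ) (f : ℝ → ℂ) :
    CnAlphaNorm b n α f =
      ∑ k ∈ range n, CnAlphaBoundaryTerm b n α f k + CnAlphaSupTerm b n α f := rfl

section

variable {b : ℝ} {n : ℕ} {α : ℝ} {f : ℝ → ℂ}

theorem cnAlphaBoundaryTerm_nonneg (hb : 0 < b) (k : ℕ) : 0 ≤ CnAlphaBoundaryTerm b n α f k := by
  unfold CnAlphaBoundaryTerm; positivity

theorem cnAlphaSupTerm_nonneg (hb : 0 < b) : 0 ≤ CnAlphaSupTerm b n α f :=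
  Real.iSup_nonneg fun y => div_nonneg (norm_nonneg _) (Real.rpow_nonneg (hb.le.trans y.2) α)

theorem cnAlphaSupTerm_le (hb : 0 < b) {M : ℝ} (hM0 : 0 ≤ M)
    (hM : ∀ y ∈ Ici b, ‖iteratedDerivWithin n f (Ici b) y‖ ≤ M * y ^ α) :
    CnAlphaSupTerm b n α f ≤ M :=
  Real.iSup_le (fun y => (div_le_iff₀ (Real.rpow_pos_of_pos (hb.trans_le y.2) α)).2 (hM y y.2))
    hM0

theorem MemCnAlpha.norm_iteratedDerivWithin_le (hb : 0 < b) (hf : MemCnAlpha b n α f)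
    {y : ℝ} (hy : y ∈ Ici b) :
    ‖iteratedDerivWithin n f (Ici b) y‖ ≤ CnAlphaSupTerm b n α f * y ^ α := by
  obtain ⟨-, M, -, hM⟩ := hf
  have hbdd : BddAbove (range fun y : Ici b => ‖iteratedDerivWithin n f (Ici b) y‖ / (y : ℝ) ^ α) :=
    ⟨M, by
      rintro _ ⟨y, rfl⟩
      exact (div_le_iff₀ (Real.rpow_pos_of_pos (hb.trans_le y.2) α)).2 (hM y y.2)⟩
  exact (div_le_iff₀ (Real.rpow_pos_of_pos (hb.trans_le hy) α)).1 (le_ciSup hbdd ⟨y, hy⟩)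

theorem norm_iteratedDerivWithin_le_of_norm_top_le (hb : 0 < b) (hα : 0 ≤ α)
    (hf : ContDiffOn ℝ n f (Ici b)) {N : ℝ} (hN0 : 0 ≤ N)
    (hN : ∀ y ∈ Ici b, ‖iteratedDerivWithin n f (Ici b) y‖ ≤ N * y ^ α) {k : ℕ} (hk : k ≤ n)
    {y : ℝ} (hy : y ∈ Ici b) :
    ‖iteratedDerivWithin k f (Ici b) y‖ ≤
      (N + ∑ m ∈ Ico k n, CnAlphaBoundaryTerm b n α f m) * y ^ ((n : ℝ) - k + α) := by
  induction hk using Nat.decreasingInduction generalizing y with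
  | self => simpa using hN y hy
  | of_succ k hkn ih =>
    have hderiv : ∀ t ∈ Ici b, HasDerivWithinAt (iteratedDerivWithin k f (Ici b))
        (iteratedDerivWithin (k + 1) f (Ici b) t) (Ici b) t := fun t ht => by
      rw [iteratedDerivWithin_succ]
      exact (hf.differentiableOn_iteratedDerivWithin (by exact_mod_cast hkn)
        (uniqueDiffOn_Ici b) t ht).hasDerivWithinAt
    have hexp : (n : ℝ) - (k + 1 : ℕ) + α + 1 = n - k + α := by push_cast; ring
    have hstep := norm_le_rpow_of_norm_hasDerivWithinAt_le hb
      (add_nonneg hN0 (sum_nonneg fun m _ => cnAlphaBoundaryTerm_nonneg hb m))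
      (by have : (k + 1 : ℝ) ≤ n := by exact_mod_cast hkn
          push_cast; linarith) hderiv (fun t ht => ih ht) hy
    rw [hexp] at hstep
    rw [sum_eq_sum_Ico_succ_bot hkn]
    convert hstep using 2
    simp only [CnAlphaBoundaryTerm]
    ring

end

section

variable {b p : ℝ} {n : ℕ} {α : ℝ} {f : ℝ → ℂ}

theorem norm_iteratedDerivWithin_ofReal_rpow_mul_le (hb : 0 < b) (hp : 0 ≤ p)
    (hf : ContDiffOn ℝ n f (Ici b)) {k : ℕ} (hk : k ≤ n) {y : ℝ} (hy : y ∈ Ici b) :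
    ‖iteratedDerivWithin k (fun y : ℝ => ((y ^ p : ℝ) : ℂ) * f y) (Ici b) y‖ ≤
      ∑ i ∈ range (k + 1),
        k.choose i * (p + n) ^ i * y ^ (p - i) * ‖iteratedDerivWithin (k - i) f (Ici b) y‖ := by
  have hleibniz := iteratedDerivWithin_mul hy (uniqueDiffOn_Ici b)
    ((contDiffOn_ofReal_rpow hb p k).contDiffWithinAt hy)
    ((hf.of_le (by exact_mod_cast hk)).contDiffWithinAt hy)
  rw [show (fun y : ℝ => ((y ^ p : ℝ) : ℂ) * f y) = (fun y : ℝ => ((y ^ p : ℝ) : ℂ)) * f from rfl,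
    hleibniz]
  refine (norm_sum_le _ _).trans (sum_le_sum fun i hi => ?_)
  have hik : (i : ℝ) ≤ n := by exact_mod_cast (mem_range_succ_iff.1 hi).trans hk
  have hrpow : ‖iteratedDerivWithin i (fun y : ℝ => ((y ^ p : ℝ) : ℂ)) (Ici b) y‖ ≤
      (p + n) ^ i * y ^ (p - i) :=
    (norm_iteratedDerivWithin_ofReal_rpow_le hb p hp i hy).trans
      (mul_le_mul_of_nonneg_right (by gcongr) (Real.rpow_nonneg (hb.le.trans hy) _))
  rw [norm_mul, norm_mul, Complex.norm_natCast]
  calc _ ≤ k.choose i * ((p + n) ^ i * y ^ (p - i)) *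
        ‖iteratedDerivWithin (k - i) f (Ici b) y‖ := by gcongr
    _ = _ := by ring

theorem cnAlphaBoundaryTerm_ofReal_rpow_mul_le (hb : 0 < b) (hp : 0 ≤ p)
    (hf : ContDiffOn ℝ n f (Ici b)) {k : ℕ} (hk : k ≤ n) :
    CnAlphaBoundaryTerm b n (α + p) (fun y : ℝ => ((y ^ p : ℝ) : ℂ) * f y) k ≤
      ∑ j ∈ range (k + 1), k.choose j * (p + n) ^ j * CnAlphaBoundaryTerm b n α f (k - j) := by
  rw [CnAlphaBoundaryTerm, div_le_iff₀ (by positivity), sum_mul]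
  refine (norm_iteratedDerivWithin_ofReal_rpow_mul_le hb hp hf hk self_mem_Ici).trans
    (sum_le_sum fun j hj => le_of_eq ?_)
  have hpow : b ^ (p - j) = b ^ ((n : ℝ) - k + (α + p)) / b ^ ((n : ℝ) - (k - j : ℕ) + α) := by
    rw [Nat.cast_sub (mem_range_succ_iff.1 hj), ← Real.rpow_sub hb]
    ring_nf
  rw [hpow, CnAlphaBoundaryTerm]
  ring

theorem norm_iteratedDerivWithin_ofReal_rpow_mul_le_of_norm_top_le (hb : 0 < b) (hp : 0 ≤ p)
    (hα : 0 ≤ α) (hf : ContDiffOn ℝ n f (Ici b)) {N : ℝ} (hN0 : 0 ≤ N)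
    (hN : ∀ y ∈ Ici b, ‖iteratedDerivWithin n f (Ici b) y‖ ≤ N * y ^ α) :
    ∀ y ∈ Ici b, ‖iteratedDerivWithin n (fun y : ℝ => ((y ^ p : ℝ) : ℂ) * f y) (Ici b) y‖ ≤
      (∑ i ∈ range (n + 1), n.choose i * (p + n) ^ i *
        (N + ∑ m ∈ Ico (n - i) n, CnAlphaBoundaryTerm b n α f m)) * y ^ (α + p) := by
  intro y hy
  have hy0 : 0 < y := hb.trans_le hy
  rw [sum_mul]
  refine (norm_iteratedDerivWithin_ofReal_rpow_mul_le hb hp hf le_rfl hy).trans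
    (sum_le_sum fun i hi => ?_)
  have hin := mem_range_succ_iff.1 hi
  have hpow : y ^ (p - i) * y ^ ((n : ℝ) - (n - i : ℕ) + α) = y ^ (α + p) := by
    rw [Nat.cast_sub hin, ← Real.rpow_add hy0]
    ring_nf
  calc _ ≤ n.choose i * (p + n) ^ i * y ^ (p - i) *
        ((N + ∑ m ∈ Ico (n - i) n, CnAlphaBoundaryTerm b n α f m) *
          y ^ ((n : ℝ) - (n - i : ℕ) + α)) := by
        gcongr
        exact norm_iteratedDerivWithin_le_of_norm_top_le hb hα hf hN0 hN (n.sub_le i) hy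
    _ = _ := by rw [← hpow]; ring

end

section Combinatorics

variable {x : ℝ} (hx : 0 ≤ x) {a : ℕ → ℝ} (ha : ∀ m, 0 ≤ a m)
include hx ha

theorem sum_range_sum_choose_mul_le (n : ℕ) :
    ∑ k ∈ range n, ∑ j ∈ range (k + 1), k.choose j * x ^ j * a (k - j) ≤
      ∑ i ∈ range (n + 1), n.choose i * x ^ i * ∑ m ∈ range (n - i), a m := by
  have hswap : ∑ k ∈ range n, ∑ j ∈ range (k + 1), k.choose j * x ^ j * a (k - j) =
      ∑ i ∈ range n, ∑ m ∈ range (n - i), ((i + m).choose i : ℝ) * x ^ i * a m := by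
    have hcomm := sum_Ico_Ico_comm 0 n fun j k => (k.choose j : ℝ) * x ^ j * a (k - j)
    simp only [Nat.Ico_zero_eq_range] at hcomm
    rw [← hcomm]
    refine sum_congr rfl fun i _ => ?_
    rw [sum_Ico_eq_sum_range]
    simp only [Nat.add_sub_cancel_left]
  rw [hswap, sum_range_succ, Nat.sub_self, sum_range_zero, mul_zero, add_zero]
  refine sum_le_sum fun i _ => ?_
  rw [mul_sum]
  refine sum_le_sum fun m hm => ?_
  have hchoose : ((i + m).choose i : ℝ) ≤ n.choose i := by
    exact_mod_cast Nat.choose_le_choose i (by have := mem_range.1 hm; omega)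
  have ham := ha m
  gcongr

theorem sum_choose_mul_add_le_add_pow_mul (N : ℝ) (n : ℕ) :
    ∑ k ∈ range n, ∑ j ∈ range (k + 1), k.choose j * x ^ j * a (k - j) +
        ∑ i ∈ range (n + 1), n.choose i * x ^ i * (N + ∑ m ∈ Ico (n - i) n, a m) ≤
      (x + 1) ^ n * (∑ m ∈ range n, a m + N) := by
  have hsplit : (x + 1) ^ n * (∑ m ∈ range n, a m + N) =
      ∑ i ∈ range (n + 1), n.choose i * x ^ i * ∑ m ∈ range (n - i), a m +
        ∑ i ∈ range (n + 1), n.choose i * x ^ i * (N + ∑ m ∈ Ico (n - i) n, a m) := by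
    rw [add_pow, sum_mul, ← sum_add_distrib]
    refine sum_congr rfl fun i _ => ?_
    rw [← sum_range_add_sum_Ico a (n.sub_le i)]
    ring
  rw [hsplit]
  exact add_le_add (sum_range_sum_choose_mul_le hx ha n) le_rfl

end Combinatorics

/-- for `p ≥ 0`, the function `y ↦ y^p·f(y)` belongs to `C_{α+p}^n([b,∞))` with
`‖y^p f‖ ≤ (p+n+1)^n·‖f‖`. -/
theorem stmt4 (b : ℝ) (hb : 0 < b) (n : ℕ) (α : ℝ) (hα : 0 ≤ α) (f : ℝ → ℂ)
    (hf : MemCnAlpha b n α f) (p : ℝ) (hp : 0 ≤ p) :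
    MemCnAlpha b n (α + p) (fun y => (↑(y ^ p) : ℂ) * f y) ∧
      CnAlphaNorm b n (α + p) (fun y => (↑(y ^ p) : ℂ) * f y) ≤
        (p + n + 1) ^ n * CnAlphaNorm b n α f := by
  have hcd := hf.1
  have hN0 : 0 ≤ CnAlphaSupTerm b n α f := cnAlphaSupTerm_nonneg hb
  have ha : ∀ m, 0 ≤ CnAlphaBoundaryTerm b n α f m := cnAlphaBoundaryTerm_nonneg hb
  have hM0 : 0 ≤ ∑ i ∈ range (n + 1), n.choose i * (p + n) ^ i *
      (CnAlphaSupTerm b n α f + ∑ m ∈ Ico (n - i) n, CnAlphaBoundaryTerm b n α f m) :=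
    sum_nonneg fun i _ => mul_nonneg (by positivity) (add_nonneg hN0 (sum_nonneg fun m _ => ha m))
  have htop := norm_iteratedDerivWithin_ofReal_rpow_mul_le_of_norm_top_le hb hp hα hcd hN0
    fun y hy => hf.norm_iteratedDerivWithin_le hb hy
  refine ⟨⟨(contDiffOn_ofReal_rpow hb p n).mul hcd, _, hM0, htop⟩, ?_⟩
  rw [cnAlphaNorm_eq, cnAlphaNorm_eq]
  calc _ ≤ ∑ k ∈ range n, ∑ j ∈ range (k + 1),
          k.choose j * (p + n) ^ j * CnAlphaBoundaryTerm b n α f (k - j) +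
        ∑ i ∈ range (n + 1), n.choose i * (p + n) ^ i *
          (CnAlphaSupTerm b n α f + ∑ m ∈ Ico (n - i) n, CnAlphaBoundaryTerm b n α f m) :=
        add_le_add
          (sum_le_sum fun k hk =>
            cnAlphaBoundaryTerm_ofReal_rpow_mul_le hb hp hcd (mem_range.1 hk).le)
          (cnAlphaSupTerm_le hb hM0 htop)
    _ ≤ _ := sum_choose_mul_add_le_add_pow_mul (by positivity) ha _ n
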